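/- arXiv:1812.04249 — 4 statements merged into one kernel-verified Lean document; each statement's English description precedes it below -/
import Mathlib

section
/- The k-th component of the isotonic least squares projection of Z onto the monotone cone equals the min-max formula: (Π_{M^n}(Z))_k = min over v with k ≤ v ≤ n of max over u with 0 ≤ u < k of (S_v - S_u)/(v - u), where S_j = Z_1 + ... + Z_j and S_0 = 0. -/
open MeasureTheory ProbabilityTheory

noncomputable section

/-- The monotone cone of non-decreasing sequences in `ℝⁿ`. -/
def Mcone (n : ℕ) : Set (Fin n → ℝ) := {θ | Monotone θ}

/-- `θ` is the isotonic least squares projection of `Z` onto the monotone cone. -/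
def IsIsoProj (n : ℕ) (Z θ : Fin n → ℝ) : Prop :=
  θ ∈ Mcone n ∧ ∀ η ∈ Mcone n, ∑ i, (Z i - θ i) ^ 2 ≤ ∑ i, (Z i - η i) ^ 2

/-- Partial sums `S_j = Z_1 + ... + Z_j`, with `S_0 = 0`. -/
def psum (n : ℕ) (Z : Fin n → ℝ) (j : ℕ) : ℝ :=
  ∑ i ∈ Finset.range j, if h : i < n then Z ⟨i, h⟩ else 0

/-- Left-hand slope of the greatest convex minorant of the cumulative sum diagram:
`Δ_k = min_{k ≤ v ≤ n} max_{0 ≤ u < k} (S_v - S_u)/(v - u)`. -/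
def gcmSlope (n : ℕ) (Z : Fin n → ℝ) (k : ℕ) (hk : 1 ≤ k) (hkn : k ≤ n) : ℝ :=
  (Finset.Icc k n).inf' (Finset.nonempty_Icc.mpr hkn) fun v =>
    (Finset.range k).sup' (Finset.nonempty_range_iff.mpr (by omega)) fun u =>
      (psum n Z v - psum n Z u) / ((v : ℝ) - (u : ℝ))

/-- Running averages `Z̄_j = (Z_1 + ... + Z_j)/j`, indexed by `j : Fin n` (`j`-th is over `j+1` terms). -/
def runAvg (n : ℕ) (Z : Fin n → ℝ) (j : Fin n) : ℝ :=
  psum n Z ((j : ℕ) + 1) / ((j : ℕ) + 1)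

/-- The `k`-th order statistic of the running averages. -/
def avgOrderStat (n : ℕ) (Z : Fin n → ℝ) (k : Fin n) : ℝ :=
  runAvg n Z (Tuple.sort (runAvg n Z) k)

/-- Exchangeability of a random vector. -/
def Exchangeable {Ω : Type*} [MeasurableSpace Ω] (P : Measure Ω) (n : ℕ)
    (Z : Ω → Fin n → ℝ) : Prop :=
  ∀ σ : Equiv.Perm (Fin n),
    Measure.map (fun ω => Z ω ∘ σ) P = Measure.map Z P


lemma psum_zero (n : ℕ) (f : Fin n → ℝ) : psum n f 0 = 0 := by simp [psum]

lemma psum_succ (n : ℕ) (f : Fin n → ℝ) (j : ℕ) (h : j < n) :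
    psum n f (j + 1) = psum n f j + f ⟨j, h⟩ := by
  simp [psum, Finset.sum_range_succ, h]

lemma psum_eq_sum (n : ℕ) (f : Fin n → ℝ) (j : ℕ) (hj : j ≤ n) :
    psum n f j = ∑ i : Fin n, if (i : ℕ) < j then f i else 0 := by
  induction j with
  | zero => simp [psum]
  | succ m ih =>
    have hm : m < n := hj
    rw [psum_succ n f m hm, ih (le_of_lt hm)]
    have hsplit : ∀ i : Fin n, (if (i : ℕ) < m + 1 then f i else 0)
        = (if (i : ℕ) < m then f i else 0) + (if i = (⟨m, hm⟩ : Fin n) then f i else 0) := by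
      intro i
      by_cases h1 : (i : ℕ) < m
      · rw [if_pos (by omega), if_pos h1, if_neg (by simp only [Fin.ext_iff]; omega)]
        ring
      · by_cases h2 : (i : ℕ) = m
        · rw [if_pos (by omega), if_neg h1, if_pos (by ext; exact h2)]
          ring
        · rw [if_neg (by omega), if_neg h1, if_neg (by intro h; apply h2; rw [h])]
          ring
    rw [Finset.sum_congr rfl (fun i _ => hsplit i), Finset.sum_add_distrib,
      Finset.sum_ite_eq' Finset.univ (⟨m, hm⟩ : Fin n) f]
    simp

lemma key_var (n : ℕ) (Z θ : Fin n → ℝ) (hθ : IsIsoProj n Z θ) (g : Fin n → ℝ)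
    (ε₀ : ℝ) (hε₀ : 0 < ε₀)
    (hg : ∀ ε : ℝ, 0 < ε → ε ≤ ε₀ → Monotone (fun i => θ i + ε * g i)) :
    ∑ i, (Z i - θ i) * g i ≤ 0 := by
  by_contra hL
  push_neg at hL
  set L := ∑ i, (Z i - θ i) * g i with hLdef
  set Q := ∑ i, (g i) ^ 2 with hQdef
  have hQ : 0 ≤ Q := Finset.sum_nonneg fun i _ => sq_nonneg _
  set ε : ℝ := min ε₀ (L / (Q + 1)) with hεdef
  have hεpos : 0 < ε := lt_min hε₀ (div_pos hL (by linarith))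
  have hmono := hg ε hεpos (min_le_left _ _)
  have hopt := hθ.2 _ hmono
  have hexp : ∑ i, (Z i - (θ i + ε * g i)) ^ 2
      = ∑ i, (Z i - θ i) ^ 2 - 2 * ε * L + ε ^ 2 * Q := by
    rw [hLdef, hQdef, Finset.mul_sum, Finset.mul_sum, ← Finset.sum_sub_distrib,
      ← Finset.sum_add_distrib]
    exact Finset.sum_congr rfl fun i _ => by ring
  rw [hexp] at hopt
  have h1 : 2 * L ≤ ε * Q := by nlinarith
  have h2 : ε * Q ≤ (L / (Q + 1)) * Q :=
    mul_le_mul_of_nonneg_right (min_le_right _ _) hQ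
  have h3 : (L / (Q + 1)) * Q < L := by
    rw [div_mul_eq_mul_div, div_lt_iff₀ (by linarith)]
    nlinarith
  linarith

lemma sum_prefix (n : ℕ) (Z θ : Fin n → ℝ) (j : ℕ) (hj : j ≤ n) :
    ∑ i : Fin n, (Z i - θ i) * (if (i : ℕ) < j then (1 : ℝ) else 0)
      = psum n Z j - psum n θ j := by
  rw [psum_eq_sum n Z j hj, psum_eq_sum n θ j hj, ← Finset.sum_sub_distrib]
  exact Finset.sum_congr rfl fun i _ => by split_ifs <;> ring

lemma R_nonneg (n : ℕ) (Z θ : Fin n → ℝ) (hθ : IsIsoProj n Z θ) (j : ℕ) (hj : j ≤ n) :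
    psum n θ j ≤ psum n Z j := by
  have h := key_var n Z θ hθ (fun i => -(if (i : ℕ) < j then (1 : ℝ) else 0)) 1 one_pos ?_
  · have h2 : ∑ i : Fin n, (Z i - θ i) * (fun i : Fin n => -(if (i : ℕ) < j then (1:ℝ) else 0)) i
        = -(psum n Z j - psum n θ j) := by
      rw [← sum_prefix n Z θ j hj, ← Finset.sum_neg_distrib]
      exact Finset.sum_congr rfl fun i _ => by ring
    rw [h2] at h
    linarith
  · intro ε hε _ i1 i2 h12
    have hm := hθ.1 h12
    have hv : (i1 : ℕ) ≤ (i2 : ℕ) := h12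
    dsimp only
    by_cases h1 : (i1 : ℕ) < j <;> by_cases h2 : (i2 : ℕ) < j <;>
      simp only [if_pos, if_neg, h1, h2, if_true, if_false] <;> first
      | linarith
      | omega

lemma R_n (n : ℕ) (Z θ : Fin n → ℝ) (hθ : IsIsoProj n Z θ) :
    psum n Z n = psum n θ n := by
  have key : ∀ c : ℝ, Monotone (fun i : Fin n => θ i + c) := by
    intro c i1 i2 h12
    have := hθ.1 h12
    dsimp only
    linarith
  have h1 := key_var n Z θ hθ (fun _ => 1) 1 one_pos (fun ε hε _ => by
    simpa using key ε)
  have h2 := key_var n Z θ hθ (fun _ => -1) 1 one_pos (fun ε hε _ => by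
    have := key (-ε)
    convert this using 2 with i
    ring)
  simp only [mul_one, mul_neg_one, ← Finset.sum_neg_distrib] at h1 h2
  rw [Finset.sum_neg_distrib] at h2
  have h3 : ∑ i : Fin n, (Z i - θ i) = 0 := by linarith
  have h4 := sum_prefix n Z θ n le_rfl
  simp only [Fin.is_lt, if_true, mul_one] at h4
  linarith


lemma slack (n : ℕ) (Z θ : Fin n → ℝ) (hθ : IsIsoProj n Z θ) (j : ℕ)
    (hj0 : 0 < j) (hjn : j < n)
    (hlt : θ ⟨j - 1, by omega⟩ < θ ⟨j, hjn⟩) :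
    psum n Z j ≤ psum n θ j := by
  have h := key_var n Z θ hθ (fun i => if (i : ℕ) < j then (1 : ℝ) else 0)
    (θ ⟨j, hjn⟩ - θ ⟨j - 1, by omega⟩) (by linarith) ?_
  · rw [sum_prefix n Z θ j (le_of_lt hjn)] at h
    linarith
  · intro ε hε hε' i1 i2 h12
    have hm := hθ.1 h12
    have hv : (i1 : ℕ) ≤ (i2 : ℕ) := h12
    dsimp only
    by_cases h1 : (i1 : ℕ) < j <;> by_cases h2 : (i2 : ℕ) < j
    · simp only [if_pos h1, if_pos h2]; linarith
    · simp only [if_pos h1, if_neg h2]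
      have ha : θ i1 ≤ θ ⟨j - 1, by omega⟩ := hθ.1 (by simp [Fin.le_def]; omega)
      have hb : θ ⟨j, hjn⟩ ≤ θ i2 := hθ.1 (by simp [Fin.le_def]; omega)
      linarith
    · omega
    · simp only [if_neg h1, if_neg h2]; linarith

lemma psum_diff_le (n : ℕ) (f : Fin n → ℝ) (c : ℝ) (u : ℕ) :
    ∀ v, u ≤ v → v ≤ n → (∀ i (h : i < n), u ≤ i → i < v → f ⟨i, h⟩ ≤ c) →
    psum n f v - psum n f u ≤ ((v : ℝ) - (u : ℝ)) * c := by
  intro v hv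
  induction v, hv using Nat.le_induction with
  | base => intro _ _; simp
  | succ m hm ih =>
    intro hmn hf
    have h1 : m < n := hmn
    rw [psum_succ n f m h1]
    have h2 := ih (le_of_lt h1) (fun i h hi him => hf i h hi (by omega))
    have h3 : f ⟨m, h1⟩ ≤ c := hf m h1 hm (by omega)
    push_cast
    linarith

lemma psum_diff_ge (n : ℕ) (f : Fin n → ℝ) (c : ℝ) (u : ℕ) :
    ∀ v, u ≤ v → v ≤ n → (∀ i (h : i < n), u ≤ i → i < v → c ≤ f ⟨i, h⟩) →
    ((v : ℝ) - (u : ℝ)) * c ≤ psum n f v - psum n f u := by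
  intro v hv
  induction v, hv using Nat.le_induction with
  | base => intro _ _; simp
  | succ m hm ih =>
    intro hmn hf
    have h1 : m < n := hmn
    rw [psum_succ n f m h1]
    have h2 := ih (le_of_lt h1) (fun i h hi him => hf i h hi (by omega))
    have h3 : c ≤ f ⟨m, h1⟩ := hf m h1 hm (by omega)
    push_cast
    linarith

/-- the components of the isotonic projection are given by the
min-max formula. -/
theorem isoProj_eq_minmax (n : ℕ) (Z θ : Fin n → ℝ) (hθ : IsIsoProj n Z θ)
    (k : Fin n) :
    θ k = gcmSlope n Z ((k : ℕ) + 1) (Nat.succ_le_succ (Nat.zero_le _)) k.isLt := by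
  classical
  have hmono := hθ.1
  have hkn : (k : ℕ) < n := k.isLt
  set A : Finset ℕ := (Finset.range ((k : ℕ) + 1)).filter
    (fun u => psum n Z u = psum n θ u) with hA
  have h0A : 0 ∈ A := by
    refine Finset.mem_filter.mpr ⟨Finset.mem_range.mpr (by omega), ?_⟩
    rw [psum_zero, psum_zero]
  set a := A.max' ⟨0, h0A⟩ with ha
  have haA : a ∈ A := Finset.max'_mem _ _
  have ha_le : a ≤ (k : ℕ) := by
    have := Finset.mem_range.mp (Finset.mem_filter.mp haA).1; omega
  have ha_eq : psum n Z a = psum n θ a := (Finset.mem_filter.mp haA).2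
  have ha_max : ∀ u, a < u → u ≤ (k : ℕ) → psum n Z u ≠ psum n θ u := by
    intro u hu1 hu2 heq
    have hmem : u ∈ A := Finset.mem_filter.mpr ⟨Finset.mem_range.mpr (by omega), heq⟩
    have := Finset.le_max' A u hmem
    omega
  set B : Finset ℕ := (Finset.Icc ((k : ℕ) + 1) n).filter
    (fun v => psum n Z v = psum n θ v) with hB
  have hnB : n ∈ B :=
    Finset.mem_filter.mpr ⟨Finset.mem_Icc.mpr ⟨by omega, le_rfl⟩, R_n n Z θ hθ⟩
  set b := B.min' ⟨n, hnB⟩ with hb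
  have hbB : b ∈ B := Finset.min'_mem _ _
  have hb_ge : (k : ℕ) + 1 ≤ b := (Finset.mem_Icc.mp (Finset.mem_filter.mp hbB).1).1
  have hb_le : b ≤ n := (Finset.mem_Icc.mp (Finset.mem_filter.mp hbB).1).2
  have hb_eq : psum n Z b = psum n θ b := (Finset.mem_filter.mp hbB).2
  have hb_min : ∀ v, (k : ℕ) + 1 ≤ v → v < b → psum n Z v ≠ psum n θ v := by
    intro v hv1 hv2 heq
    have hmem : v ∈ B := Finset.mem_filter.mpr ⟨Finset.mem_Icc.mpr ⟨hv1, by omega⟩, heq⟩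
    have := Finset.min'_le B v hmem
    omega
  have han : a < n := by omega
  set c := θ ⟨a, han⟩ with hc
  have const : ∀ j, a ≤ j → j < b → ∀ (h : j < n), θ ⟨j, h⟩ = c := by
    intro j hj
    induction j, hj using Nat.le_induction with
    | base => intro _ _; rfl
    | succ m hm ih =>
      intro hmb h
      have hRm : psum n Z (m + 1) ≠ psum n θ (m + 1) := by
        rcases le_or_gt (m + 1) (k : ℕ) with hle | hlt
        · exact ha_max (m + 1) (by omega) hle
        · exact hb_min (m + 1) (by omega) hmb
      have heq : θ ⟨m, by omega⟩ = θ ⟨m + 1, h⟩ := by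
        by_contra hne
        have hle' : θ ⟨m, by omega⟩ ≤ θ ⟨m + 1, h⟩ :=
          hmono (show (⟨m, by omega⟩ : Fin n) ≤ ⟨m + 1, h⟩ from by
            simp [Fin.mk_le_mk])
        have hlt2 : θ ⟨m, by omega⟩ < θ ⟨m + 1, h⟩ := lt_of_le_of_ne hle' hne
        have h1 := slack n Z θ hθ (m + 1) (by omega) h (by simpa using hlt2)
        have h2 := R_nonneg n Z θ hθ (m + 1) (by omega)
        exact hRm (le_antisymm h1 h2)
      rw [← heq]
      exact ih (by omega) (by omega)
  have hck : θ k = c := by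
    have := const (k : ℕ) ha_le (by omega) hkn
    rwa [Fin.eta] at this
  have hθle : ∀ i (h : i < n), i < b → θ ⟨i, h⟩ ≤ c := by
    intro i h hib
    rcases le_or_gt a i with hai | hia
    · exact le_of_eq (const i hai hib h)
    · rw [hc]
      exact hmono (show (⟨i, h⟩ : Fin n) ≤ ⟨a, han⟩ from by simp [Fin.mk_le_mk]; omega)
  have hθge : ∀ i (h : i < n), a ≤ i → c ≤ θ ⟨i, h⟩ := by
    intro i h hai
    rw [hc]
    exact hmono (show (⟨a, han⟩ : Fin n) ≤ ⟨i, h⟩ from by simp [Fin.mk_le_mk]; omega)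
  rw [hck]
  unfold gcmSlope
  apply le_antisymm
  · apply Finset.le_inf'
    intro v hv
    rw [Finset.mem_Icc] at hv
    have hva : a < v := by omega
    have hstep : c ≤ (psum n Z v - psum n Z a) / ((v : ℝ) - (a : ℝ)) := by
      have hpos : (0 : ℝ) < (v : ℝ) - (a : ℝ) := by
        have : (a : ℝ) < (v : ℝ) := by exact_mod_cast hva
        linarith
      rw [le_div_iff₀ hpos]
      have h1 := psum_diff_ge n θ c a v (by omega) hv.2 (fun i h hai _ => hθge i h hai)
      have h2 := R_nonneg n Z θ hθ v hv.2
      rw [ha_eq]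
      nlinarith [h1, h2]
    exact le_trans hstep (Finset.le_sup'
      (fun u => (psum n Z v - psum n Z u) / ((v : ℝ) - (u : ℝ)))
      (Finset.mem_range.mpr (by omega)))
  · have hbmem : b ∈ Finset.Icc ((k : ℕ) + 1) n := Finset.mem_Icc.mpr ⟨hb_ge, hb_le⟩
    refine le_trans (Finset.inf'_le _ hbmem) ?_
    apply Finset.sup'_le
    intro u hu
    rw [Finset.mem_range] at hu
    have hub : u < b := by omega
    have hpos : (0 : ℝ) < (b : ℝ) - (u : ℝ) := by
      have : (u : ℝ) < (b : ℝ) := by exact_mod_cast hub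
      linarith
    rw [div_le_iff₀ hpos]
    have h1 := psum_diff_le n θ c u b (by omega) hb_le (fun i h _ hib => hθle i h hib)
    have h2 := R_nonneg n Z θ hθ u (by omega)
    rw [hb_eq]
    nlinarith [h1, h2]
end
end

section
/- Let Δ_k denote the left-hand slope at k of the greatest convex minorant of the cumulative sum diagram of Z_1,...,Z_n. Then for every k and every real z, the event {Δ_k ≤ z} equals the event {M_z ≥ k}, where M_z is the last argmin of the sequence (S_i - iz) for i = 0,...,n. -/
open MeasureTheory ProbabilityTheory

noncomputable section

/-- pathwise, `Δ_k ≤ z` iff the last argmin of `i ↦ S_i - i z`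
over `i = 0,…,n` is at least `k`. -/
theorem gcmSlope_le_iff_lastArgmin_ge (n : ℕ) (Z : Fin n → ℝ) (z : ℝ) (m : ℕ)
    (hmn : m ≤ n)
    (hmin : ∀ i ≤ n, psum n Z m - (m : ℝ) * z ≤ psum n Z i - (i : ℝ) * z)
    (hlast : ∀ i ≤ n, psum n Z i - (i : ℝ) * z = psum n Z m - (m : ℝ) * z → i ≤ m)
    (k : ℕ) (hk : 1 ≤ k) (hkn : k ≤ n) :
    gcmSlope n Z k hk hkn ≤ z ↔ k ≤ m := by
  rw [gcmSlope, Finset.inf'_le_iff]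
  constructor
  · rintro ⟨v, hv, hvz⟩
    rw [Finset.sup'_le_iff] at hvz
    simp only [Finset.mem_Icc] at hv
    by_contra hkm
    push_neg at hkm
    have h1 := hvz m (Finset.mem_range.mpr hkm)
    have hmv : m < v := lt_of_lt_of_le hkm hv.1
    have hpos : (0:ℝ) < (v:ℝ) - (m:ℝ) := sub_pos.mpr (Nat.cast_lt.mpr hmv)
    rw [div_le_iff₀ hpos] at h1
    have h2 := hmin v hv.2
    have heq : psum n Z v - (v:ℝ)*z = psum n Z m - (m:ℝ)*z := by nlinarith
    have := hlast v hv.2 heq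
    omega
  · intro hkm
    refine ⟨m, Finset.mem_Icc.mpr ⟨hkm, hmn⟩, ?_⟩
    rw [Finset.sup'_le_iff]
    intro u hu
    rw [Finset.mem_range] at hu
    have hum : u < m := lt_of_lt_of_le hu hkm
    have hpos : (0:ℝ) < (m:ℝ) - (u:ℝ) := sub_pos.mpr (Nat.cast_lt.mpr hum)
    rw [div_le_iff₀ hpos]
    have := hmin u (by omega)
    nlinarith
end
end

section
/- The projection of any Z ∈ R^n onto the cone M^n_+ = M^n ∩ R^n_+ of non-negative non-decreasing sequences equals the coordinatewise positive part of the projection onto M^n: Π_{M^n_+}(Z) = (Π_{M^n}(Z))_+. -/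
open MeasureTheory ProbabilityTheory

noncomputable section

/-- The cone of non-negative non-decreasing sequences. -/
def MconePlus (n : ℕ) : Set (Fin n → ℝ) := {θ | Monotone θ ∧ ∀ i, 0 ≤ θ i}

/-- `θ` is the least squares projection of `Z` onto the non-negative monotone cone. -/
def IsIsoProjPlus (n : ℕ) (Z θ : Fin n → ℝ) : Prop :=
  θ ∈ MconePlus n ∧ ∀ η ∈ MconePlus n, ∑ i, (Z i - θ i) ^ 2 ≤ ∑ i, (Z i - η i) ^ 2

/-- Variational inequality from the distance minimization along a segment. -/
lemma key_le (n : ℕ) (Z θ η : Fin n → ℝ)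
    (h : ∀ t : ℝ, 0 < t → t ≤ 1 →
      ∑ i, (Z i - θ i) ^ 2 ≤ ∑ i, (Z i - ((1 - t) * θ i + t * η i)) ^ 2) :
    ∑ i, (Z i - θ i) * (η i - θ i) ≤ 0 := by
  set A := ∑ i, (Z i - θ i) * (η i - θ i) with hA
  set B := ∑ i, (η i - θ i) ^ 2 with hBdef
  have hB0 : 0 ≤ B := Finset.sum_nonneg fun i _ => sq_nonneg _
  have hAB : ∀ t : ℝ, 0 < t → t ≤ 1 → 2 * t * A ≤ t ^ 2 * B := by
    intro t ht ht1
    have h1 := h t ht ht1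
    have expand : ∑ i, (Z i - ((1 - t) * θ i + t * η i)) ^ 2
        = ∑ i, ((Z i - θ i) ^ 2 - 2 * t * ((Z i - θ i) * (η i - θ i))
            + t ^ 2 * (η i - θ i) ^ 2) := by
      apply Finset.sum_congr rfl; intro i _; ring
    rw [expand, Finset.sum_add_distrib, Finset.sum_sub_distrib,
      ← Finset.mul_sum, ← Finset.mul_sum, ← hA, ← hBdef] at h1
    linarith
  by_contra hApos
  push_neg at hApos
  rcases eq_or_lt_of_le hB0 with hB0' | hBpos
  · have := hAB 1 one_pos le_rfl
    nlinarith
  · set t := min 1 (A / B) with htdef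
    have htpos : 0 < t := lt_min one_pos (div_pos hApos hBpos)
    have ht1 : t ≤ 1 := min_le_left _ _
    have htAB : t ≤ A / B := min_le_right _ _
    have h2 := hAB t htpos ht1
    have htB : t * B ≤ A := by
      rw [div_eq_mul_inv] at htAB
      calc t * B ≤ (A * B⁻¹) * B := by nlinarith
        _ = A := by field_simp
    nlinarith

/-- the projection onto the non-negative monotone cone is the
coordinatewise positive part of the projection onto the monotone cone. -/
theorem isoProjPlus_eq_posPart (n : ℕ) (Z θ : Fin n → ℝ) (hθ : IsIsoProj n Z θ) :
    IsIsoProjPlus n Z fun i => max (θ i) 0 := by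
  obtain ⟨hθmono, hθmin⟩ := hθ
  have hθmono' : Monotone θ := hθmono
  -- the variational inequality for the monotone cone
  have var : ∀ η : Fin n → ℝ, Monotone η →
      ∑ i, (Z i - θ i) * (η i - θ i) ≤ 0 := by
    intro η hη
    apply key_le
    intro t ht ht1
    have hmem : (fun i => (1 - t) * θ i + t * η i) ∈ Mcone n := by
      refine Monotone.add ?_ ?_
      · exact (hθmono'.const_mul (by linarith : (0:ℝ) ≤ 1 - t))
      · exact hη.const_mul ht.le
    exact hθmin _ hmem
  set θp : Fin n → ℝ := fun i => max (θ i) 0 with hθp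
  have hθpmono : Monotone θp := hθmono'.max monotone_const
  have hθmmono : Monotone (fun i => min (θ i) 0) := hθmono'.min monotone_const
  -- ⟨Z-θ, θ⟩ = 0
  have v2 : ∑ i, (Z i - θ i) * (2 * θ i - θ i) ≤ 0 :=
    var (fun i => 2 * θ i) (hθmono'.const_mul (by norm_num : (0:ℝ) ≤ 2))
  have v0 : ∑ i, (Z i - θ i) * (0 - θ i) ≤ 0 :=
    var (fun i => 0) monotone_const
  have orth : ∑ i, (Z i - θ i) * θ i = 0 := by
    have e2 : ∑ i, (Z i - θ i) * (2 * θ i - θ i) = ∑ i, (Z i - θ i) * θ i := by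
      apply Finset.sum_congr rfl; intro i _; ring
    have e0 : ∑ i, (Z i - θ i) * (0 - θ i) = -∑ i, (Z i - θ i) * θ i := by
      rw [← Finset.sum_neg_distrib]
      apply Finset.sum_congr rfl; intro i _; ring
    rw [e2] at v2; rw [e0] at v0; linarith
  -- ⟨Z-θ, θ⁺⟩ ≤ 0 and ⟨Z-θ, θ⁻⟩ ≤ 0, hence both are 0
  have vplus : ∑ i, (Z i - θ i) * θp i ≤ 0 := by
    have := var (fun i => θ i + θp i) (hθmono'.add hθpmono)
    have e : ∑ i, (Z i - θ i) * ((θ i + θp i) - θ i) = ∑ i, (Z i - θ i) * θp i := by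
      apply Finset.sum_congr rfl; intro i _; ring
    rw [e] at this; exact this
  have vminus : ∑ i, (Z i - θ i) * (min (θ i) 0) ≤ 0 := by
    have := var (fun i => θ i + min (θ i) 0) (hθmono'.add hθmmono)
    have e : ∑ i, (Z i - θ i) * ((θ i + min (θ i) 0) - θ i)
        = ∑ i, (Z i - θ i) * (min (θ i) 0) := by
      apply Finset.sum_congr rfl; intro i _; ring
    rw [e] at this; exact this
  have split : ∑ i, (Z i - θ i) * θp i + ∑ i, (Z i - θ i) * (min (θ i) 0)
      = ∑ i, (Z i - θ i) * θ i := by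
    rw [← Finset.sum_add_distrib]
    apply Finset.sum_congr rfl; intro i _
    have : θp i + min (θ i) 0 = θ i := by
      simp only [hθp]; rcases le_or_gt (θ i) 0 with h | h
      · rw [max_eq_right h, min_eq_left h]; ring
      · rw [max_eq_left h.le, min_eq_right h.le]; ring
    linear_combination (Z i - θ i) * this
  have orthp : ∑ i, (Z i - θ i) * θp i = 0 := by
    rw [orth] at split; linarith
  -- key orthogonality for θp: ⟨Z - θp, θp⟩ = 0
  have orthp' : ∑ i, (Z i - θp i) * θp i = 0 := by
    rw [← orthp]
    apply Finset.sum_congr rfl; intro i _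
    have : θp i * (θp i - θ i) = 0 := by
      simp only [hθp]; rcases le_or_gt (θ i) 0 with h | h
      · rw [max_eq_right h]; ring
      · rw [max_eq_left h.le]; ring
    nlinarith [this]
  refine ⟨⟨hθpmono, fun i => le_max_right _ _⟩, ?_⟩
  intro η hη
  obtain ⟨hηmono, hηnn⟩ := hη
  -- ⟨Z - θp, η⟩ ≤ 0
  have hZθη : ∑ i, (Z i - θ i) * η i ≤ 0 := by
    have := var η hηmono
    have e : ∑ i, (Z i - θ i) * (η i - θ i)
        = ∑ i, (Z i - θ i) * η i - ∑ i, (Z i - θ i) * θ i := by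
      rw [← Finset.sum_sub_distrib]
      apply Finset.sum_congr rfl; intro i _; ring
    rw [e, orth] at this; linarith
  have hneg : ∑ i, (θ i - θp i) * η i ≤ 0 := by
    apply Finset.sum_nonpos; intro i _
    apply mul_nonpos_of_nonpos_of_nonneg
    · simp only [hθp]; linarith [le_max_left (θ i) 0]
    · exact hηnn i
  have hZθpη : ∑ i, (Z i - θp i) * η i ≤ 0 := by
    have e : ∑ i, (Z i - θp i) * η i
        = ∑ i, (Z i - θ i) * η i + ∑ i, (θ i - θp i) * η i := by
      rw [← Finset.sum_add_distrib]
      apply Finset.sum_congr rfl; intro i _; ring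
    rw [e]; linarith
  -- final expansion
  have expand : ∑ i, (Z i - η i) ^ 2
      = ∑ i, (Z i - θp i) ^ 2 + ∑ i, (θp i - η i) ^ 2
        + 2 * (∑ i, (Z i - θp i) * θp i - ∑ i, (Z i - θp i) * η i) := by
    rw [mul_sub, Finset.mul_sum, Finset.mul_sum, ← Finset.sum_sub_distrib,
      ← Finset.sum_add_distrib, ← Finset.sum_add_distrib]
    apply Finset.sum_congr rfl; intro i _; ring
  have hsq : 0 ≤ ∑ i, (θp i - η i) ^ 2 := Finset.sum_nonneg fun i _ => sq_nonneg _
  simp only [hθp] at expand orthp' hZθpη hsq ⊢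
  linarith
end
end

section
/- For any vector Z ∈ R^n with greatest convex minorant C of its cumulative sum diagram, the slope of C switches from non-positive to positive at the last argmin M of the partial sums: for every k, Δ_k ≤ 0 if and only if M ≥ k, where Δ_k is the k-th left-hand slope. -/
open MeasureTheory ProbabilityTheory

noncomputable section

/-- pathwise, the slope of the greatest convex minorant switches
sign at the last argmin of the partial sums: `Δ_k ≤ 0 ↔ M ≥ k`. -/
theorem gcmSlope_nonpos_iff_lastArgmin_ge (n : ℕ) (Z : Fin n → ℝ) (m : ℕ)
    (hmn : m ≤ n)
    (hmin : ∀ i ≤ n, psum n Z m ≤ psum n Z i)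
    (hlast : ∀ i ≤ n, psum n Z i = psum n Z m → i ≤ m)
    (k : ℕ) (hk : 1 ≤ k) (hkn : k ≤ n) :
    gcmSlope n Z k hk hkn ≤ 0 ↔ k ≤ m := by
  constructor
  · intro hΔ
    by_contra h
    push_neg at h
    have hpos : 0 < gcmSlope n Z k hk hkn := by
      rw [gcmSlope, Finset.lt_inf'_iff]
      intro v hv
      rw [Finset.mem_Icc] at hv
      rw [Finset.lt_sup'_iff]
      refine ⟨m, Finset.mem_range.mpr h, ?_⟩
      have hvm : m < v := lt_of_lt_of_le h hv.1
      have hS : psum n Z m < psum n Z v := by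
        rcases lt_or_eq_of_le (hmin v hv.2) with h' | h'
        · exact h'
        · exact absurd (hlast v hv.2 h'.symm) (not_le.mpr hvm)
      have : (0:ℝ) < (v:ℝ) - (m:ℝ) := by
        have : (m:ℝ) < v := by exact_mod_cast hvm
        linarith
      exact div_pos (by linarith) this
    linarith
  · intro hkm
    have hmem : m ∈ Finset.Icc k n := Finset.mem_Icc.mpr ⟨hkm, hmn⟩
    refine le_trans (Finset.inf'_le _ hmem) ?_
    apply Finset.sup'_le
    intro u hu
    rw [Finset.mem_range] at hu
    have hum : u < m := lt_of_lt_of_le hu hkm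
    apply div_nonpos_of_nonpos_of_nonneg
    · have := hmin u (le_of_lt (lt_of_lt_of_le hum hmn))
      linarith
    · have : (u:ℝ) < m := by exact_mod_cast hum
      linarith
end
end
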